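/- Let Q = [[0,1],[1,0]] ⊕ [[0,2],[2,0]] ⊕ [[-4,2],[2,-4]] and let O(M) = {g ∈ GL₆(ℤ) : ᵗgQg = Q}. The subset O(M)₀ of elements whose upper-left 2×2 block is ≡ I₂ mod 2 is a normal subgroup of index 2 in O(M), with the nontrivial coset represented by g₀ = [[0,1],[1,0]] ⊕ I₄. -/

import Mathlib

open Matrix

/-- The Gram matrix of `U ⊕ U(2) ⊕ A₂(2)`, over `ℤ`. -/
def Qi : Matrix (Fin 6) (Fin 6) ℤ :=
  !![0,1,0,0,0,0; 1,0,0,0,0,0; 0,0,0,2,0,0; 0,0,2,0,0,0; 0,0,0,0,-4,2; 0,0,0,0,2,-4]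

/-- Membership in the integral orthogonal group `O(M)`. -/
def InOM (g : Matrix (Fin 6) (Fin 6) ℤ) : Prop := IsUnit g.det ∧ gᵀ * Qi * g = Qi

/-- The upper-left 2×2 block of `g` is congruent to `I₂` mod 2. -/
def BlkI (g : Matrix (Fin 6) (Fin 6) ℤ) : Prop :=
  (2 : ℤ) ∣ g 0 0 - 1 ∧ (2 : ℤ) ∣ g 0 1 ∧ (2 : ℤ) ∣ g 1 0 ∧ (2 : ℤ) ∣ g 1 1 - 1

/-- The coset representative `g₀ = [[0,1],[1,0]] ⊕ I₄`. -/
def gZero : Matrix (Fin 6) (Fin 6) ℤ :=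
  !![0,1,0,0,0,0; 1,0,0,0,0,0; 0,0,1,0,0,0; 0,0,0,1,0,0; 0,0,0,0,1,0; 0,0,0,0,0,1]

/-!
Reduction mod 2 kills every term of `Q` except the hyperbolic plane on the first two
coordinates, whose mod 2 orthogonal group is `{I₂, [[0,1],[1,0]]}`.  For `g ∈ O(M)` the
relation `ᵗgQg = Q` read mod 2 (and, on the diagonal, mod 4) forces the first two rows of `g`
to be `≡ 0 mod 2` outside the first two columns and the upper-left block to be one of those
two matrices. Hence the upper-left block mod 2 is multiplicative on `O(M)`, giving a
homomorphism onto a group of order 2, with kernel `O(M)₀` and `g₀` mapping to the swap.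
-/

def topBlock (g : Matrix (Fin 6) (Fin 6) ℤ) : Matrix (Fin 2) (Fin 2) (ZMod 2) :=
  !![(g 0 0 : ZMod 2), g 0 1; g 1 0, g 1 1]

lemma blkI_iff_topBlock_eq_one (g : Matrix (Fin 6) (Fin 6) ℤ) : BlkI g ↔ topBlock g = 1 := by
  have h0 (a : ℤ) : (2 : ℤ) ∣ a ↔ (a : ZMod 2) = 0 := by
    exact_mod_cast (ZMod.intCast_zmod_eq_zero_iff_dvd a 2).symm
  have h1 (a : ℤ) : (2 : ℤ) ∣ a - 1 ↔ (a : ZMod 2) = 1 := by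
    simpa [eq_comm] using (ZMod.intCast_eq_intCast_iff_dvd_sub 1 a 2).symm
  rw [BlkI, h1, h0, h0, h1]
  simp [topBlock, ← Matrix.ext_iff, Fin.forall_fin_two, and_assoc]

lemma topBlock_one : topBlock 1 = 1 := by
  ext i j; fin_cases i <;> fin_cases j <;> rfl

lemma topBlock_gZero : topBlock gZero = !![0, 1; 1, 0] := by
  ext i j; fin_cases i <;> fin_cases j <;> rfl

lemma transpose_mul_Qi_mul_apply (g : Matrix (Fin 6) (Fin 6) ℤ) (i j : Fin 6) :
    (gᵀ * Qi * g) i j = g 0 i * g 1 j + g 1 i * g 0 j + 2 * (g 2 i * g 3 j + g 3 i * g 2 j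
      - 2 * g 4 i * g 4 j + g 4 i * g 5 j + g 5 i * g 4 j - 2 * g 5 i * g 5 j) := by
  simp [mul_apply, Fin.sum_univ_six, Qi]
  ring

section

variable {g : Matrix (Fin 6) (Fin 6) ℤ}

lemma cast_row_zero_mul_row_one (hg : gᵀ * Qi * g = Qi) (i j : Fin 6) :
    (g 0 i : ZMod 2) * g 1 j + (g 1 i : ZMod 2) * g 0 j = (Qi i j : ZMod 2) := by
  have h := congrArg (Int.cast : ℤ → ZMod 2) (transpose_mul_Qi_mul_apply g i j)
  rw [hg] at h
  push_cast at h
  rw [h, show (2 : ZMod 2) = 0 from rfl]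
  ring

lemma cast_row_zero_mul_row_one_self (hg : gᵀ * Qi * g = Qi) {j : Fin 6} (hj : j.val < 2) :
    (g 0 j : ZMod 2) * g 1 j = 0 := by
  have hQ : Qi j j = 0 := by
    obtain rfl | rfl : j = 0 ∨ j = 1 := by omega
    all_goals rfl
  have h := transpose_mul_Qi_mul_apply g j j
  rw [hg, hQ] at h
  exact_mod_cast (ZMod.intCast_zmod_eq_zero_iff_dvd _ 2).2
    ⟨-(g 2 j * g 3 j) + g 4 j * g 4 j - g 4 j * g 5 j + g 5 j * g 5 j, by push_cast; linarith⟩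

lemma topBlock_eq_one_or_swap (hg : gᵀ * Qi * g = Qi) :
    topBlock g = 1 ∨ topBlock g = !![0, 1; 1, 0] := by
  have h00 := cast_row_zero_mul_row_one_self hg (j := 0) (by decide)
  have h11 := cast_row_zero_mul_row_one_self hg (j := 1) (by decide)
  have h01 := cast_row_zero_mul_row_one hg 0 1
  rw [show ((Qi 0 1 : ℤ) : ZMod 2) = 1 from rfl] at h01
  rw [topBlock]
  generalize (g 0 0 : ZMod 2) = a, (g 0 1 : ZMod 2) = b, (g 1 0 : ZMod 2) = c,
    (g 1 1 : ZMod 2) = d at *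
  -- over `𝔽₂`, `ac = bd = 0` and `ad + bc = 1` leave only `I₂` and the swap
  revert a b c d
  decide

lemma cast_apply_eq_zero_of_two_le (hg : gᵀ * Qi * g = Qi) {i k : Fin 6} (hi : i.val < 2)
    (hk : 2 ≤ k.val) :
    (g i k : ZMod 2) = 0 := by
  have hQ : Qi 0 k = 0 ∧ Qi 1 k = 0 := by
    revert k; decide
  have h0 := cast_row_zero_mul_row_one hg 0 k
  have h1 := cast_row_zero_mul_row_one hg 1 k
  rw [hQ.1, Int.cast_zero] at h0
  rw [hQ.2, Int.cast_zero] at h1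
  -- `h0`, `h1` say that the transpose of the invertible block `topBlock g` kills `(g 1 k, g 0 k)`
  obtain rfl | rfl : i = 0 ∨ i = 1 := by omega
  all_goals
    rcases topBlock_eq_one_or_swap hg with h | h <;>
      simp only [topBlock, ← Matrix.ext_iff, Fin.forall_fin_two] at h <;>
      simp_all

lemma topBlock_mul (hg : gᵀ * Qi * g = Qi) (h : Matrix (Fin 6) (Fin 6) ℤ) :
    topBlock (g * h) = topBlock g * topBlock h := by
  ext i j
  fin_cases i <;> fin_cases j <;>
    simp [topBlock, mul_apply, Fin.sum_univ_six, Fin.sum_univ_two,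
      cast_apply_eq_zero_of_two_le hg]

end

lemma inOM_one : InOM 1 := ⟨by simp, by simp⟩

lemma inOM_gZero : InOM gZero := by
  have hsq : gZero * gZero = 1 := by decide
  exact ⟨IsUnit.of_mul_eq_one gZero.det (by rw [← det_mul, hsq, det_one]), by decide⟩

/-- `O(M)₀ = {g ∈ O(M) : upper-left 2×2 block ≡ I₂ mod 2}` is a normal subgroup of
index 2 in `O(M)`, whose nontrivial coset is represented by `g₀`. -/
theorem stmt13 :
    (InOM 1 ∧ BlkI 1) ∧
    (∀ g h, InOM g → InOM h → BlkI g → BlkI h → BlkI (g * h)) ∧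
    (∀ g h, InOM g → InOM h → g * h = 1 → BlkI g → BlkI h) ∧
    (∀ g n h, InOM g → InOM n → InOM h → g * h = 1 → BlkI n → BlkI (g * n * h)) ∧
    (InOM gZero ∧ ¬ BlkI gZero) ∧
    (∀ g, InOM g → (BlkI g ∨ BlkI (gZero * g))) := by
  simp only [blkI_iff_topBlock_eq_one]
  refine ⟨⟨inOM_one, topBlock_one⟩, ?_, ?_, ?_,
    ⟨inOM_gZero, by rw [topBlock_gZero]; decide⟩, ?_⟩
  · intro g h hg _ hg1 hh1
    rw [topBlock_mul hg.2, hg1, hh1, one_mul]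
  · intro g h hg _ hgh hg1
    simpa [topBlock_mul hg.2, hg1, topBlock_one] using congrArg topBlock hgh
  · intro g n h hg hn _ hgh hn1
    rw [Matrix.mul_assoc, topBlock_mul hg.2, topBlock_mul hn.2, hn1, one_mul,
      ← topBlock_mul hg.2, hgh, topBlock_one]
  · intro g hg
    refine (topBlock_eq_one_or_swap hg.2).imp id fun hswap => ?_
    rw [topBlock_mul inOM_gZero.2, topBlock_gZero, hswap]
    decide
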